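/- Let V be a (G_Γ, β, γ0)-vertex algebra and M a (G_Γ, β, γ0)-left V-module as in the context. Then: (i) Y^M_{−1}(u, Y^M_{−2}(v, w)) ∈ C₂(M) for all u, v ∈ V, w ∈ M, and Y^M_{−1}(Y_{−2}(u, v), w) ∈ C₂(M) for all u, v ∈ V, w ∈ M; (ii) Y^M_{−1}(Y_{−1}(u, v), w) − Y^M_{−1}(u, Y^M_{−1}(v, w)) ∈ C₂(M) for all u, v ∈ V, w ∈ M. Consequently Y^M_{−1} induces on R(M) = M/C₂(M) the structure of a left module over the C₂-algebra R(V) = V/C₂(V) (whose product is induced by Y_{−1} and whose unit is the class of 𝟙). -/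

import Mathlib

/-- The generalized binomial coefficient `binom(a, i) = a(a-1)⋯(a-i+1)/i!`
for `a : ℤ`, `i : ℕ`; it is an integer. -/
def zbinom (a : ℤ) (i : ℕ) : ℤ :=
  if 0 ≤ a then (a.toNat.choose i : ℤ)
  else (-1 : ℤ) ^ i * ((((i : ℤ) - a - 1).toNat).choose i : ℤ)

/-- A `(G_Γ, β, γ0)`-vertex algebra in component form, *without* the
derivation axiom (which is to be derived): a `Γ`-graded `k`-vector space `V`
(internal direct sum of the subspaces `Vg γ`), bilinear products
`Y n : V → V → V` of degree `n • γ0`, and a vacuum vector `vac ∈ V_0`,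
satisfying truncation, vacuum, creation and the `β`-Jacobi identity. -/
structure PreVA (k : Type*) [Field k] (Γ : Type*) [AddCommGroup Γ] [DecidableEq Γ]
    (γ0 : Γ) (β : Γ → Γ → k)
    (V : Type*) [AddCommGroup V] [Module k V] where
  Vg : Γ → Submodule k V
  internal : DirectSum.IsInternal Vg
  Y : ℤ → V →ₗ[k] V →ₗ[k] V
  vac : V
  vac_mem : vac ∈ Vg 0
  grading : ∀ (n : ℤ) (γ1 γ2 : Γ) (u v : V), u ∈ Vg γ1 → v ∈ Vg γ2 →
      Y n u v ∈ Vg (γ1 + γ2 + n • γ0)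
  truncation : ∀ u v : V, ∃ N : ℤ, ∀ n : ℤ, N ≤ n → Y n u v = 0
  vacuum_left : ∀ v : V, Y (-1) vac v = v
  vacuum_left' : ∀ n : ℤ, n ≠ -1 → ∀ v : V, Y n vac v = 0
  creation : ∀ v : V, Y (-1) v vac = v
  creation' : ∀ n : ℤ, 0 ≤ n → ∀ v : V, Y n v vac = 0
  jacobi : ∀ (l m n : ℤ) (γ1 γ2 : Γ) (u v w : V), u ∈ Vg γ1 → v ∈ Vg γ2 →
      (∑ᶠ i : ℕ, (((-1 : k) ^ i * (zbinom l i : k)) •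
          Y (m + l - (i : ℤ)) u (Y (n + (i : ℤ)) v w)))
        - ((-1 : k) ^ l * β γ1 γ2) •
            (∑ᶠ i : ℕ, (((-1 : k) ^ i * (zbinom l i : k)) •
              Y (n + l - (i : ℤ)) v (Y (m + (i : ℤ)) u w)))
        = ∑ᶠ i : ℕ, ((zbinom m i : k) •
            Y (m + n - (i : ℤ)) (Y (l + (i : ℤ)) u v) w)


/-- A `(G_Γ, β, γ0)`-vertex algebra in component form: a `PreVA` together
with the derivation properties of `D(v) = Y_{-2}(v, 𝟙)`, namely
`D(Y_n(u,v)) - Y_n(u, D v) = -n • Y_{n-1}(u,v)` and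
`Y_n(D u, v) = -n • Y_{n-1}(u,v)`. -/
structure VA (k : Type*) [Field k] (Γ : Type*) [AddCommGroup Γ] [DecidableEq Γ]
    (γ0 : Γ) (β : Γ → Γ → k)
    (V : Type*) [AddCommGroup V] [Module k V]
    extends PreVA k Γ γ0 β V where
  deriv1 : ∀ (n : ℤ) (u v : V),
      Y (-2) (Y n u v) vac - Y n u (Y (-2) v vac) = (-n) • Y (n - 1) u v
  deriv2 : ∀ (n : ℤ) (u v : V),
      Y n (Y (-2) u vac) v = (-n) • Y (n - 1) u v

/-- The subspace `C₂(V) = span_k { Y_{-2}(u, v) : u, v ∈ V }`. -/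
def C2 {k Γ V : Type*} [Field k] [AddCommGroup Γ] [DecidableEq Γ]
    [AddCommGroup V] [Module k V] {γ0 : Γ} {β : Γ → Γ → k}
    (A : VA k Γ γ0 β V) : Submodule k V :=
  Submodule.span k {x : V | ∃ u v : V, A.Y (-2) u v = x}

/-- The data of a `(G_Γ, β, γ0)`-left module over a vertex algebra `A`,
*without* the derivation axiom: a `Γ`-graded `k`-vector space `M` with
bilinear action maps `YM n : V → M → M` of degree `n • γ0`, satisfying the
vacuum, truncation and `β`-Jacobi axioms. -/
structure PreVMod {k Γ V : Type*} [Field k] [AddCommGroup Γ] [DecidableEq Γ]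
    [AddCommGroup V] [Module k V] {γ0 : Γ} {β : Γ → Γ → k}
    (A : VA k Γ γ0 β V)
    (M : Type*) [AddCommGroup M] [Module k M] where
  Mg : Γ → Submodule k M
  internal : DirectSum.IsInternal Mg
  YM : ℤ → V →ₗ[k] M →ₗ[k] M
  grading : ∀ (n : ℤ) (γ δ : Γ) (v : V) (w : M), v ∈ A.Vg γ → w ∈ Mg δ →
      YM n v w ∈ Mg (γ + δ + n • γ0)
  vacuum : ∀ w : M, YM (-1) A.vac w = w
  vacuum' : ∀ n : ℤ, n ≠ -1 → ∀ w : M, YM n A.vac w = 0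
  truncation : ∀ (v : V) (w : M), ∃ N : ℤ, ∀ n : ℤ, N ≤ n → YM n v w = 0
  jacobi : ∀ (l m n : ℤ) (γ1 γ2 : Γ) (u v : V) (w : M),
      u ∈ A.Vg γ1 → v ∈ A.Vg γ2 →
      (∑ᶠ i : ℕ, (((-1 : k) ^ i * (zbinom l i : k)) •
          YM (m + l - (i : ℤ)) u (YM (n + (i : ℤ)) v w)))
        - ((-1 : k) ^ l * β γ1 γ2) •
            (∑ᶠ i : ℕ, (((-1 : k) ^ i * (zbinom l i : k)) •
              YM (n + l - (i : ℤ)) v (YM (m + (i : ℤ)) u w)))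
        = ∑ᶠ i : ℕ, ((zbinom m i : k) •
            YM (m + n - (i : ℤ)) (A.Y (l + (i : ℤ)) u v) w)

/-- A `(G_Γ, β, γ0)`-left module over the vertex algebra `A`: a `PreVMod`
together with the derivation axioms: there is a `k`-linear `D^M : M → M` with
`D^M(Y^M_n(v,w)) - Y^M_n(v, D^M w) = -n • Y^M_{n-1}(v,w)` and
`Y^M_n(D v, w) = -n • Y^M_{n-1}(v,w)` where `D(v) = Y_{-2}(v, 𝟙)`. -/
structure VMod {k Γ V : Type*} [Field k] [AddCommGroup Γ] [DecidableEq Γ]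
    [AddCommGroup V] [Module k V] {γ0 : Γ} {β : Γ → Γ → k}
    (A : VA k Γ γ0 β V)
    (M : Type*) [AddCommGroup M] [Module k M]
    extends PreVMod A M where
  DM : M →ₗ[k] M
  derivM1 : ∀ (n : ℤ) (v : V) (w : M),
      DM (YM n v w) - YM n v (DM w) = (-n) • YM (n - 1) v w
  derivM2 : ∀ (n : ℤ) (v : V) (w : M),
      YM n (A.Y (-2) v A.vac) w = (-n) • YM (n - 1) v w

/-- The subspace `C₂(M) = span_k { Y^M_{-2}(v, w) : v ∈ V, w ∈ M }`. -/
def C2M {k Γ V : Type*} [Field k] [AddCommGroup Γ] [DecidableEq Γ]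
    [AddCommGroup V] [Module k V] {γ0 : Γ} {β : Γ → Γ → k}
    {A : VA k Γ γ0 β V} {M : Type*} [AddCommGroup M] [Module k M]
    (B : VMod A M) : Submodule k M :=
  Submodule.span k {x : M | ∃ (v : V) (w : M), B.YM (-2) v w = x}

/-!
Everything rests on one observation: the derivation axiom
`Y^M_n(D v, w) = -n Y^M_{n-1}(v, w)` can be solved for `Y^M_{n-1}` when `n ≠ 0`, so by downward
induction every mode `Y^M_n` with `n ≤ -2` lands in `C₂(M)`. Each of the three congruences is then
an instance of the `β`-Jacobi identity for homogeneous `u, v` (with `(l, m, n)` equal to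
`(0, -1, -2)`, `(-2, 0, -1)` and `(-1, 0, -1)`) in which all but one or two terms involve such a
mode, extended to all `u, v` by bilinearity. The congruences say exactly that `Y^M_{-1}` descends
to a bilinear map `V/C₂(V) × M/C₂(M) → M/C₂(M)` which is associative; applied to `V` as a module
over itself they also give the product of `V/C₂(V)`.
-/

section FiniteSums

variable {ι : Sort*} {M S : Type*} [AddCommGroup M] [SetLike S M] [AddSubgroupClass S M] {P : S}

theorem finsum_mem_of_forall {f : ι → M} (h : ∀ i, f i ∈ P) : ∑ᶠ i, f i ∈ P :=
  finsum_induction (· ∈ P) (zero_mem P) (fun _ _ => add_mem) h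

theorem finsum_sub_mem_of_forall_ne {ι : Type*} {f : ι → M} (a : ι)
    (hf : Function.HasFiniteSupport f) (h : ∀ i ≠ a, f i ∈ P) : ∑ᶠ i, f i - f a ∈ P := by
  rw [← add_finsum_cond_ne a hf, add_sub_cancel_left]
  exact finsum_mem_of_forall fun i => finsum_mem_of_forall fun hi => h i hi

end FiniteSums

theorem LinearMap.map_mem_of_iSup_eq_top₂ {R M N P ι κ : Type*} [CommSemiring R]
    [AddCommMonoid M] [AddCommMonoid N] [AddCommMonoid P] [Module R M] [Module R N] [Module R P]
    {p : ι → Submodule R M} {q : κ → Submodule R N} (hp : ⨆ i, p i = ⊤) (hq : ⨆ j, q j = ⊤)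
    (Φ : M →ₗ[R] N →ₗ[R] P) {T : Submodule R P}
    (h : ∀ i j, ∀ x ∈ p i, ∀ y ∈ q j, Φ x y ∈ T) (x : M) (y : N) : Φ x y ∈ T := by
  have hleft : ∀ i, ∀ x ∈ p i, ∀ y, Φ x y ∈ T := fun i x hx y => by
    have : ⨆ j, q j ≤ T.comap (Φ x) := iSup_le fun j y hy => h i j x hx y hy
    exact (hq ▸ this) Submodule.mem_top
  have : ⨆ i, p i ≤ ⨅ y, T.comap (Φ.flip y) :=
    iSup_le fun i x hx => Submodule.mem_iInf _ |>.mpr fun y => hleft i x hx y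
  exact Submodule.mem_iInf _ |>.mp ((hp ▸ this) Submodule.mem_top) y

theorem zbinom_zero_right (a : ℤ) : zbinom a 0 = 1 := by
  simp [zbinom]

theorem zbinom_zero_left {i : ℕ} (hi : i ≠ 0) : zbinom 0 i = 0 := by
  simp [zbinom, Nat.choose_eq_zero_of_lt (Nat.pos_of_ne_zero hi)]

def VA.selfModule {k Γ V : Type*} [Field k] [AddCommGroup Γ] [DecidableEq Γ]
    [AddCommGroup V] [Module k V] {γ0 : Γ} {β : Γ → Γ → k} (A : VA k Γ γ0 β V) :
    VMod A V where
  Mg := A.Vg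
  internal := A.internal
  YM := A.Y
  grading := A.grading
  vacuum := A.vacuum_left
  vacuum' := A.vacuum_left'
  truncation := A.truncation
  jacobi := A.jacobi
  DM := (A.Y (-2)).flip A.vac
  derivM1 := A.deriv1
  derivM2 := A.deriv2

namespace VMod

variable {k Γ V M : Type*} [Field k] [AddCommGroup Γ] [DecidableEq Γ]
  [AddCommGroup V] [Module k V] [AddCommGroup M] [Module k M]
  {γ0 : Γ} {β : Γ → Γ → k} {A : VA k Γ γ0 β V} (B : VMod A M)

theorem hasFiniteSupport_YM_add (n : ℤ) (v : V) (w : M) :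
    Function.HasFiniteSupport fun i : ℕ => B.YM (n + i) v w := by
  obtain ⟨N, hN⟩ := B.truncation v w
  refine (Set.finite_Iio (N - n).toNat).subset fun i hi => ?_
  by_contra hlt
  exact hi (hN _ (by simp only [Set.mem_Iio, not_lt] at hlt; omega))

variable [CharZero k]

theorem YM_mem_C2M_of_le {n : ℤ} (hn : n ≤ -2) (v : V) (w : M) :
    B.YM n v w ∈ C2M B := by
  induction n, hn using Int.leInductionDown generalizing v with
  | base => exact Submodule.subset_span ⟨v, w, rfl⟩
  | pred n hn ih =>
    have hn0 : ((-n : ℤ) : k) ≠ 0 := Int.cast_ne_zero.mpr (by omega)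
    have hD : B.YM n (A.Y (-2) v A.vac) w = ((-n : ℤ) : k) • B.YM (n - 1) v w := by
      rw [B.derivM2, Int.cast_smul_eq_zsmul]
    rw [← inv_smul_smul₀ hn0 (B.YM (n - 1) v w), ← hD]
    exact Submodule.smul_mem _ _ (ih _)

theorem finsum_smul_YM_mem_C2M (c : ℕ → k) (n : ℕ → ℤ) (hn : ∀ i, n i ≤ -2)
    (x : ℕ → V) (y : ℕ → M) : ∑ᶠ i, c i • B.YM (n i) (x i) (y i) ∈ C2M B :=
  finsum_mem_of_forall fun i => Submodule.smul_mem _ _ (B.YM_mem_C2M_of_le (hn i) _ _)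

theorem YM_neg_one_YM_neg_two_mem_C2M (u v : V) (w : M) :
    B.YM (-1) u (B.YM (-2) v w) ∈ C2M B := by
  refine LinearMap.map_mem_of_iSup_eq_top₂ A.internal.submodule_iSup_eq_top
    A.internal.submodule_iSup_eq_top ((B.YM (-1)).compl₂ ((B.YM (-2)).flip w))
    (fun γ1 γ2 u hu v hv => ?_) u v
  have hjac := B.jacobi 0 (-1) (-2) γ1 γ2 u v w hu hv
  rw [finsum_eq_single _ 0 fun i hi => by simp [zbinom_zero_left hi]] at hjac
  simp only [zbinom_zero_right, pow_zero, Int.cast_one, mul_one, one_smul, Nat.cast_zero,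
    sub_zero, add_zero, zero_add] at hjac
  simp only [LinearMap.compl₂_apply, LinearMap.flip_apply]
  rw [eq_add_of_sub_eq hjac]
  exact add_mem (B.finsum_smul_YM_mem_C2M _ _ (fun i => by omega) _ _)
    (Submodule.smul_mem _ _ (B.finsum_smul_YM_mem_C2M _ _ (fun i => by omega) _ _))

theorem YM_neg_one_Y_neg_two_mem_C2M (u v : V) (w : M) :
    B.YM (-1) (A.Y (-2) u v) w ∈ C2M B := by
  refine LinearMap.map_mem_of_iSup_eq_top₂ A.internal.submodule_iSup_eq_top
    A.internal.submodule_iSup_eq_top ((A.Y (-2)).compr₂ ((B.YM (-1)).flip w))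
    (fun γ1 γ2 u hu v hv => ?_) u v
  have hjac := B.jacobi (-2) 0 (-1) γ1 γ2 u v w hu hv
  rw [finsum_eq_single (fun i : ℕ => (zbinom 0 i : k) • _) 0
    fun i hi => by simp [zbinom_zero_left hi]] at hjac
  simp only [zbinom_zero_right, Int.cast_one, one_smul, Nat.cast_zero, sub_zero, add_zero,
    zero_add] at hjac
  simp only [LinearMap.compr₂_apply, LinearMap.flip_apply]
  rw [← hjac]
  exact sub_mem (B.finsum_smul_YM_mem_C2M _ _ (fun i => by omega) _ _)
    (Submodule.smul_mem _ _ (B.finsum_smul_YM_mem_C2M _ _ (fun i => by omega) _ _))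

theorem YM_neg_one_Y_neg_one_sub_mem_C2M (u v : V) (w : M) :
    B.YM (-1) (A.Y (-1) u v) w - B.YM (-1) u (B.YM (-1) v w) ∈ C2M B := by
  refine LinearMap.map_mem_of_iSup_eq_top₂ A.internal.submodule_iSup_eq_top
    A.internal.submodule_iSup_eq_top
    ((A.Y (-1)).compr₂ ((B.YM (-1)).flip w) - (B.YM (-1)).compl₂ ((B.YM (-1)).flip w))
    (fun γ1 γ2 u hu v hv => ?_) u v
  have hjac := B.jacobi (-1) 0 (-1) γ1 γ2 u v w hu hv
  rw [finsum_eq_single (fun i : ℕ => (zbinom 0 i : k) • _) 0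
    fun i hi => by simp [zbinom_zero_left hi]] at hjac
  simp only [zbinom_zero_right, Int.cast_one, one_smul, Nat.cast_zero, sub_zero, add_zero,
    zero_add] at hjac
  set f : ℕ → M := fun i =>
    ((-1 : k) ^ i * (zbinom (-1) i : k)) • B.YM (-1 - i) u (B.YM (-1 + i) v w)
  have hf0 : f 0 = B.YM (-1) u (B.YM (-1) v w) := by simp [f, zbinom_zero_right]
  have hfin : Function.HasFiniteSupport f :=
    (B.hasFiniteSupport_YM_add (-1) v w).subset fun i hi h0 => hi (by simp [f, h0])
  simp only [LinearMap.sub_apply, LinearMap.compr₂_apply, LinearMap.compl₂_apply,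
    LinearMap.flip_apply]
  rw [← hf0, ← hjac, sub_right_comm]
  exact sub_mem (finsum_sub_mem_of_forall_ne 0 hfin fun i hi =>
      Submodule.smul_mem _ _ (B.YM_mem_C2M_of_le (by omega) _ _))
    (Submodule.smul_mem _ _ (B.finsum_smul_YM_mem_C2M _ _ (fun i => by omega) _ _))

noncomputable def quotientC2Action : (V ⧸ C2 A) →ₗ[k] (M ⧸ C2M B) →ₗ[k] (M ⧸ C2M B) :=
  ((B.YM (-1)).compr₂ (C2M B).mkQ).liftQ₂ (C2 A) (C2M B)
    (Submodule.span_le.mpr <| by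
      rintro _ ⟨u, v, rfl⟩
      ext w
      exact (Submodule.Quotient.mk_eq_zero _).mpr (B.YM_neg_one_Y_neg_two_mem_C2M u v w))
    (Submodule.span_le.mpr <| by
      rintro _ ⟨v, w, rfl⟩
      ext u
      exact (Submodule.Quotient.mk_eq_zero _).mpr (B.YM_neg_one_YM_neg_two_mem_C2M u v w))

theorem quotientC2Action_mk (v : V) (w : M) :
    B.quotientC2Action (Submodule.Quotient.mk v) (Submodule.Quotient.mk w) =
      Submodule.Quotient.mk (B.YM (-1) v w) :=
  rfl

theorem quotientC2Action_assoc (a b : V ⧸ C2 A) (m : M ⧸ C2M B) :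
    B.quotientC2Action (A.selfModule.quotientC2Action a b) m =
      B.quotientC2Action a (B.quotientC2Action b m) := by
  induction a using Submodule.Quotient.induction_on with | H u =>
  induction b using Submodule.Quotient.induction_on with | H v =>
  induction m using Submodule.Quotient.induction_on with | H w =>
  exact (Submodule.Quotient.eq _).mpr (B.YM_neg_one_Y_neg_one_sub_mem_C2M u v w)

theorem quotientC2Action_vac (m : M ⧸ C2M B) :
    B.quotientC2Action (Submodule.Quotient.mk A.vac) m = m := by
  induction m using Submodule.Quotient.induction_on with | H w =>
  exact congrArg _ (B.vacuum w)

end VMod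

/-- for a `(G_Γ, β, γ0)`-vertex algebra `V` and a
`(G_Γ, β, γ0)`-left `V`-module `M`:
(i) `Y^M_{-1}(u, Y^M_{-2}(v,w)) ∈ C₂(M)` and
`Y^M_{-1}(Y_{-2}(u,v), w) ∈ C₂(M)`;
(ii) `Y^M_{-1}(Y_{-1}(u,v), w) - Y^M_{-1}(u, Y^M_{-1}(v,w)) ∈ C₂(M)`.
Consequently `Y^M_{-1}` induces on `R(M) = M/C₂(M)` a left module structure
over the `C₂`-algebra `R(V) = V/C₂(V)` (product induced by `Y_{-1}`, unit the
class of `𝟙`). -/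
theorem statement14 {k Γ V M : Type*} [Field k] [CharZero k] [AddCommGroup Γ]
    [DecidableEq Γ] [AddCommGroup V] [Module k V] [AddCommGroup M] [Module k M]
    (γ0 : Γ) (β : Γ → Γ → k) (A : VA k Γ γ0 β V) (B : VMod A M) :
    (∀ (u v : V) (w : M), B.YM (-1) u (B.YM (-2) v w) ∈ C2M B) ∧
    (∀ (u v : V) (w : M), B.YM (-1) (A.Y (-2) u v) w ∈ C2M B) ∧
    (∀ (u v : V) (w : M),
      B.YM (-1) (A.Y (-1) u v) w - B.YM (-1) u (B.YM (-1) v w) ∈ C2M B) ∧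
    (∃ (π : (V ⧸ C2 A) → (V ⧸ C2 A) → (V ⧸ C2 A))
       (πM : (V ⧸ C2 A) → (M ⧸ C2M B) → (M ⧸ C2M B)),
      (∀ u v : V, π (Submodule.Quotient.mk u) (Submodule.Quotient.mk v)
          = Submodule.Quotient.mk (A.Y (-1) u v)) ∧
      (∀ (v : V) (w : M),
        πM (Submodule.Quotient.mk v) (Submodule.Quotient.mk w)
          = Submodule.Quotient.mk (B.YM (-1) v w)) ∧
      (∀ (a b : V ⧸ C2 A) (m : M ⧸ C2M B),
        πM (π a b) m = πM a (πM b m)) ∧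
      (∀ m : M ⧸ C2M B, πM (Submodule.Quotient.mk A.vac) m = m)) :=
  ⟨B.YM_neg_one_YM_neg_two_mem_C2M, B.YM_neg_one_Y_neg_two_mem_C2M,
    B.YM_neg_one_Y_neg_one_sub_mem_C2M, fun a b => A.selfModule.quotientC2Action a b,
    fun a m => B.quotientC2Action a m, A.selfModule.quotientC2Action_mk,
    B.quotientC2Action_mk, B.quotientC2Action_assoc, B.quotientC2Action_vac⟩
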